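/- Let F have characteristic 2, (V,*) and (W,⋄) anticommutative F-algebras with bilinear forms φ and ψ. The Vidinli algebras A(V,*,φ) and A(W,⋄,ψ) are isomorphic as unital algebras if and only if there exist a linear form f ∈ V* and a linear isomorphism Φ : V → W such that Φ(u*v + f(u)v + f(v)u) = Φ(u) ⋄ Φ(v) and φ(u,v) + f(u)f(v) + f(u*v) = ψ(Φ(u), Φ(v)) for all u, v ∈ V. -/

import Mathlib

/-- The multiplication of the unital algebra `A(V,*,φ)` on `F ⊕ V`:
`(α1+u)(β1+v) = (αβ + φ(u,v))·1 + (αv + βu + u*v)`. -/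
def amul {F V : Type*} [Field F] [AddCommGroup V] [Module F V]
    (φ : V →ₗ[F] V →ₗ[F] F) (m : V →ₗ[F] V →ₗ[F] V) (x y : F × V) : F × V :=
  (x.1 * y.1 + φ x.2 y.2, x.1 • y.2 + y.1 • x.2 + m x.2 y.2)

/-!
A linear map `F ⊕ V → F ⊕ W` fixing `1` is `α1 + u ↦ (α + f(u))1 + Φ(u)` for a linear form `f`
and a linear map `Φ`, and it is bijective exactly when `Φ` is. Comparing both sides of
multiplicativity on `u, v ∈ V` gives the two identities, up to the terms `2 f(u) f(v)` and
`2 (f(u)Φ(v) + f(v)Φ(u))`, which vanish in characteristic `2`; conversely these identities make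
the map multiplicative on all of `F ⊕ V`.
-/

section UnitalMap

variable {F V W : Type*} [Field F] [AddCommGroup V] [Module F V] [AddCommGroup W] [Module F W]

def unitalMap (f : V →ₗ[F] F) (Φ : V →ₗ[F] W) : F × V →ₗ[F] F × W :=
  (LinearMap.fst F F V + f ∘ₗ LinearMap.snd F F V).prod (Φ ∘ₗ LinearMap.snd F F V)

@[simp]
lemma unitalMap_apply (f : V →ₗ[F] F) (Φ : V →ₗ[F] W) (x : F × V) :
    unitalMap f Φ x = (x.1 + f x.2, Φ x.2) :=
  rfl

lemma exists_eq_unitalMap (e : F × V →ₗ[F] F × W) (he : e (1, 0) = (1, 0)) :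
    ∃ (f : V →ₗ[F] F) (Φ : V →ₗ[F] W), e = unitalMap f Φ := by
  refine ⟨LinearMap.fst F F W ∘ₗ e ∘ₗ LinearMap.inr F F V,
    LinearMap.snd F F W ∘ₗ e ∘ₗ LinearMap.inr F F V,
    LinearMap.prod_ext (LinearMap.ext_ring (by simp [he, Prod.mk_zero_zero])) ?_⟩
  ext v <;> simp

lemma unitalMap_bijective_iff (f : V →ₗ[F] F) (Φ : V →ₗ[F] W) :
    Function.Bijective (unitalMap f Φ) ↔ Function.Bijective Φ := by
  constructor
  · rintro ⟨hinj, hsurj⟩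
    refine ⟨fun u v huv ↦ ?_, fun w ↦ ?_⟩
    · have : unitalMap f Φ (f v, u) = unitalMap f Φ (f u, v) := by
        simp [huv, add_comm]
      exact congrArg Prod.snd (hinj this)
    · obtain ⟨x, hx⟩ := hsurj (0, w)
      exact ⟨x.2, congrArg Prod.snd hx⟩
  · rintro ⟨hinj, hsurj⟩
    refine ⟨fun x y hxy ↦ ?_, fun y ↦ ?_⟩
    · simp only [unitalMap_apply, Prod.ext_iff] at hxy
      have h2 : x.2 = y.2 := hinj hxy.2
      exact Prod.ext (by simpa [h2] using hxy.1) h2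
    · obtain ⟨v, hv⟩ := hsurj y.2
      exact ⟨(y.1 - f v, v), by simp [hv]⟩

lemma unitalMap_amul_iff (hchar : (2 : F) = 0) (f : V →ₗ[F] F) (Φ : V →ₗ[F] W)
    (m : V →ₗ[F] V →ₗ[F] V) (n : W →ₗ[F] W →ₗ[F] W)
    (φ : V →ₗ[F] V →ₗ[F] F) (ψ : W →ₗ[F] W →ₗ[F] F) :
    (∀ x y : F × V,
      unitalMap f Φ (amul φ m x y) = amul ψ n (unitalMap f Φ x) (unitalMap f Φ y)) ↔
    (∀ u v : V, Φ (m u v + f u • v + f v • u) = n (Φ u) (Φ v)) ∧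
    (∀ u v : V, φ u v + f u * f v + f (m u v) = ψ (Φ u) (Φ v)) := by
  constructor
  · intro hmul
    have hpure (u v : V) := Prod.ext_iff.1 (hmul (0, u) (0, v))
    simp only [amul, unitalMap_apply, zero_mul, zero_add, zero_smul, add_zero] at hpure
    refine ⟨fun u v ↦ ?_, fun u v ↦ ?_⟩
    · simp only [map_add, map_smul]
      linear_combination (norm := module) (hpure u v).2 + hchar • (f u • Φ v + f v • Φ u)
    · linear_combination (hpure u v).1 + f u * f v * hchar
  · rintro ⟨hΦ, hφ⟩ ⟨a, u⟩ ⟨b, v⟩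
    have hΦuv := hΦ u v
    simp only [map_add, map_smul] at hΦuv
    simp only [amul, unitalMap_apply, Prod.ext_iff, map_add, map_smul, smul_eq_mul]
    constructor
    · linear_combination hφ u v - f u * f v * hchar
    · linear_combination (norm := module) hΦuv - hchar • (f u • Φ v + f v • Φ u)

end UnitalMap

theorem stmt18_general {F V W : Type*} [Field F] [AddCommGroup V] [Module F V]
    [AddCommGroup W] [Module F W]
    (hchar : (2 : F) = 0)
    (m : V →ₗ[F] V →ₗ[F] V)
    (n : W →ₗ[F] W →ₗ[F] W)
    (φ : V →ₗ[F] V →ₗ[F] F) (ψ : W →ₗ[F] W →ₗ[F] F) :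
    (∃ e : (F × V) ≃ₗ[F] (F × W),
      e ((1, 0) : F × V) = (1, 0) ∧
      ∀ x y : F × V, e (amul φ m x y) = amul ψ n (e x) (e y)) ↔
    (∃ (f : V →ₗ[F] F) (Φ : V ≃ₗ[F] W),
      (∀ u v : V, Φ (m u v + f u • v + f v • u) = n (Φ u) (Φ v)) ∧
      (∀ u v : V, φ u v + f u * f v + f (m u v) = ψ (Φ u) (Φ v))) := by
  constructor
  · rintro ⟨e, he1, hmul⟩
    obtain ⟨f, Φ, hfΦ⟩ := exists_eq_unitalMap e.toLinearMap he1
    have hΦ : Function.Bijective Φ := (unitalMap_bijective_iff f Φ).1 (hfΦ ▸ e.bijective)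
    have he (x : F × V) : e x = unitalMap f Φ x := LinearMap.congr_fun hfΦ x
    refine ⟨f, LinearEquiv.ofBijective Φ hΦ, ?_⟩
    exact (unitalMap_amul_iff hchar f Φ m n φ ψ).1 fun x y ↦ by simpa only [he] using hmul x y
  · rintro ⟨f, Φ, hmul⟩
    let e := LinearEquiv.ofBijective (unitalMap f Φ.toLinearMap)
      ((unitalMap_bijective_iff f _).2 Φ.bijective)
    exact ⟨e, by simp [e], (unitalMap_amul_iff hchar f _ m n φ ψ).2 hmul⟩

/-- In characteristic `2`, the Vidinli algebras `A(V,*,φ)` and `A(W,⋄,ψ)` are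
isomorphic as unital algebras iff there are a linear form `f ∈ V*` and a linear
isomorphism `Φ : V → W` with `Φ(u*v + f(u)v + f(v)u) = Φ(u) ⋄ Φ(v)` and
`φ(u,v) + f(u)f(v) + f(u*v) = ψ(Φ(u), Φ(v))` for all `u, v`. -/
theorem stmt18 {F V W : Type*} [Field F] [AddCommGroup V] [Module F V]
    [AddCommGroup W] [Module F W]
    (hchar : (2 : F) = 0)
    (m : V →ₗ[F] V →ₗ[F] V) (hm : ∀ u : V, m u u = 0)
    (n : W →ₗ[F] W →ₗ[F] W) (hn : ∀ w : W, n w w = 0)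
    (φ : V →ₗ[F] V →ₗ[F] F) (ψ : W →ₗ[F] W →ₗ[F] F) :
    (∃ e : (F × V) ≃ₗ[F] (F × W),
      e ((1, 0) : F × V) = (1, 0) ∧
      ∀ x y : F × V, e (amul φ m x y) = amul ψ n (e x) (e y)) ↔
    (∃ (f : V →ₗ[F] F) (Φ : V ≃ₗ[F] W),
      (∀ u v : V, Φ (m u v + f u • v + f v • u) = n (Φ u) (Φ v)) ∧
      (∀ u v : V, φ u v + f u * f v + f (m u v) = ψ (Φ u) (Φ v))) :=
  stmt18_general hchar m n φ ψ
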